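/- The bigclaw graph is not weakly closed. -/

import Mathlib

/-- `G` is weakly closed: some labeling of the vertices by `1, …, n` is such that for
every edge `{i, j}` with `i < j` and every `i < k < j`, `{i,k} ∈ E(G)` or `{k,j} ∈ E(G)`. -/
def WeaklyClosed {V : Type*} [Fintype V] (G : SimpleGraph V) : Prop :=
  ∃ σ : V ≃ Fin (Fintype.card V), ∀ i j k : V,
    G.Adj i j → σ i < σ k → σ k < σ j → G.Adj i k ∨ G.Adj k j

/-- The bigclaw: the tree on seven vertices `c = 0`, `a₁ = 1`, `a₂ = 2`, `a₃ = 3`,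
`b₁ = 4`, `b₂ = 5`, `b₃ = 6` with edges `{c,aᵢ}` and `{aᵢ,bᵢ}` for `i = 1, 2, 3`. -/
def bigclaw : SimpleGraph (Fin 7) :=
  SimpleGraph.fromEdgeSet {s(0, 1), s(0, 2), s(0, 3), s(1, 4), s(2, 5), s(3, 6)}

/-!
Weakly closed graphs have no asteroidal triple. In a weakly closed labeling, a walk from a
vertex labelled below `z` to one labelled above `z` has an edge jumping over `z`, and `z` is
adjacent to an endpoint of that edge; so no such walk avoids the closed neighbourhood of `z`.
Of three vertices, the one with the middle label is therefore never avoided by a walk joining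
the other two. In the bigclaw the three leaves `b₁, b₂, b₃` form an asteroidal triple.
-/

namespace SimpleGraph

variable {V α : Type*} {G : SimpleGraph V}

def IsWeaklyClosedLabeling [LT α] (G : SimpleGraph V) (σ : V → α) : Prop :=
  ∀ i j k : V, G.Adj i j → σ i < σ k → σ k < σ j → G.Adj i k ∨ G.Adj k j

def ReachableAvoiding (G : SimpleGraph V) (z x y : V) : Prop :=
  ∃ p : G.Walk x y, ∀ w ∈ p.support, w ≠ z ∧ ¬ G.Adj w z

def IsAsteroidalTriple (G : SimpleGraph V) (x y z : V) : Prop :=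
  G.ReachableAvoiding x y z ∧ G.ReachableAvoiding y x z ∧ G.ReachableAvoiding z x y

theorem ReachableAvoiding.symm {x y z : V} (h : G.ReachableAvoiding z x y) :
    G.ReachableAvoiding z y x := by
  obtain ⟨p, hp⟩ := h
  exact ⟨p.reverse, fun w hw => hp w (by simpa using hw)⟩

theorem ReachableAvoiding.left_ne {x y z : V} (h : G.ReachableAvoiding z x y) : x ≠ z :=
  let ⟨p, hp⟩ := h
  (hp x p.start_mem_support).1

namespace IsWeaklyClosedLabeling

variable [LinearOrder α] {σ : V → α}

theorem exists_mem_support_eq_or_adj (hσ : G.IsWeaklyClosedLabeling σ)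
    (hinj : Function.Injective σ) {x y z : V} (p : G.Walk x y) (hxz : σ x < σ z)
    (hzy : σ z < σ y) : ∃ w ∈ p.support, w = z ∨ G.Adj w z := by
  induction p with
  | nil => exact (lt_asymm hxz hzy).elim
  | @cons x u y hxu p ih =>
    rcases lt_trichotomy (σ u) (σ z) with huz | huz | hzu
    · obtain ⟨w, hw, hwz⟩ := ih huz hzy
      exact ⟨w, by simp [hw], hwz⟩
    · exact ⟨u, by simp, .inl (hinj huz)⟩
    · rcases hσ x u z hxu hxz hzu with hxz' | hzu'
      · exact ⟨x, by simp, .inr hxz'⟩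
      · exact ⟨u, by simp, .inr hzu'.symm⟩

theorem not_reachableAvoiding (hσ : G.IsWeaklyClosedLabeling σ)
    (hinj : Function.Injective σ) {x y z : V} (hxz : σ x < σ z) (hzy : σ z < σ y) :
    ¬ G.ReachableAvoiding z x y := by
  rintro ⟨p, hp⟩
  obtain ⟨w, hw, hwz⟩ := hσ.exists_mem_support_eq_or_adj hinj p hxz hzy
  exact hwz.elim (hp w hw).1 (hp w hw).2

theorem not_isAsteroidalTriple (hσ : G.IsWeaklyClosedLabeling σ)
    (hinj : Function.Injective σ) {x y z : V} : ¬ G.IsAsteroidalTriple x y z := by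
  rintro ⟨hx, hy, hz⟩
  have hxy := hinj.ne hy.left_ne
  have hxz := hinj.ne hz.left_ne
  have hyz := hinj.ne hz.symm.left_ne
  rcases hxy.lt_or_gt with hxy | hxy <;> rcases hxz.lt_or_gt with hxz | hxz <;>
    rcases hyz.lt_or_gt with hyz | hyz
  all_goals first
    | order
    | exact hσ.not_reachableAvoiding hinj ‹_› ‹_› hx
    | exact hσ.not_reachableAvoiding hinj ‹_› ‹_› hx.symm
    | exact hσ.not_reachableAvoiding hinj ‹_› ‹_› hy
    | exact hσ.not_reachableAvoiding hinj ‹_› ‹_› hy.symm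
    | exact hσ.not_reachableAvoiding hinj ‹_› ‹_› hz
    | exact hσ.not_reachableAvoiding hinj ‹_› ‹_› hz.symm

end IsWeaklyClosedLabeling

end SimpleGraph

theorem WeaklyClosed.not_isAsteroidalTriple {V : Type*} [Fintype V] {G : SimpleGraph V}
    (hG : WeaklyClosed G) {x y z : V} : ¬ G.IsAsteroidalTriple x y z :=
  let ⟨σ, hσ⟩ := hG
  SimpleGraph.IsWeaklyClosedLabeling.not_isAsteroidalTriple hσ σ.injective

theorem bigclaw_adj_iff {u v : Fin 7} : bigclaw.Adj u v ↔
    s(u, v) ∈ ({s(0, 1), s(0, 2), s(0, 3), s(1, 4), s(2, 5), s(3, 6)} : Finset (Sym2 (Fin 7))) ∧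
      u ≠ v := by
  simp [bigclaw]

theorem bigclaw_isAsteroidalTriple : bigclaw.IsAsteroidalTriple 4 5 6 := by
  have e (u v : Fin 7) (h : _ := by decide) : bigclaw.Adj u v := bigclaw_adj_iff.2 h
  refine ⟨⟨.cons (e 5 2) <| .cons (e 2 0) <| .cons (e 0 3) <| .cons (e 3 6) .nil, ?_⟩,
    ⟨.cons (e 4 1) <| .cons (e 1 0) <| .cons (e 0 3) <| .cons (e 3 6) .nil, ?_⟩,
    ⟨.cons (e 4 1) <| .cons (e 1 0) <| .cons (e 0 2) <| .cons (e 2 5) .nil, ?_⟩⟩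
  all_goals
    simp only [SimpleGraph.Walk.support_cons, SimpleGraph.Walk.support_nil, bigclaw_adj_iff]
    decide

/-- The bigclaw graph is not weakly closed. -/
theorem bigclaw_not_weaklyClosed : ¬ WeaklyClosed bigclaw :=
  fun h => h.not_isAsteroidalTriple bigclaw_isAsteroidalTriple
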